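/- Suppose n = 2m+1 with m ≥ 0. Then, with N the μ̃_{2m+1} × μ̃_{2m+1} regular nilpotent matrix, one has (𝟏 − N) · ∏_{k=1}^{m} ( ∑_{j=0}^{a_{2k}−1} N^{j·d_{2k−1}} ) = χ_{2m+1}; equivalently, φ_{2m+1}(N) · (𝟏 − N) · ∏_{k=1}^{m} ( ∑_{j=0}^{a_{2k}−1} N^{j·d_{2k−1}} ) = 𝟏. -/

import Mathlib

open Finset Matrix Polynomial FreeAbelianGroup

/-- `d k = a 1 * a 2 * ⋯ * a k`, with `d 0 = 1`. -/
def chainD (a : ℕ → ℕ) (k : ℕ) : ℕ := ∏ i ∈ Finset.Icc 1 k, a i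

/-- `μ̃ 0 = 1`, `μ̃ k = d k - μ̃ (k-1)`. -/
def chainMu (a : ℕ → ℕ) : ℕ → ℤ
  | 0 => 1
  | k + 1 => (chainD a (k + 1) : ℤ) - chainMu a k

/-- `φ_n(t) = ∏_{i=0}^{n} (1 - t^{d_i})^{(-1)^{n-i}}` as a rational function over `ℚ`. -/
noncomputable def chainPhi (a : ℕ → ℕ) (n : ℕ) : RatFunc ℚ :=
  ∏ i ∈ Finset.range (n + 1),
    ((1 : RatFunc ℚ) - RatFunc.X ^ (chainD a i)) ^ ((-1 : ℤ) ^ (n - i))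

/-- the regular nilpotent `μ × μ` matrix -/
def nilpN (μ : ℕ) : Matrix (Fin μ) (Fin μ) ℚ :=
  Matrix.of fun i j => if (j : ℕ) = (i : ℕ) + 1 then 1 else 0

/-- `χ = ∑_{i=0}^{μ-1} c_i N^i` -/
noncomputable def chiMat (μ : ℕ) (c : ℕ → ℚ) : Matrix (Fin μ) (Fin μ) ℚ :=
  ∑ i ∈ Finset.range μ, c i • (nilpN μ) ^ i

/-- the companion-type matrix `M₁`: `(M₁)_{i,1} = -c'_i`, `(M₁)_{i,i+1} = 1` (1-based). -/
def M1mat (μ : ℕ) (c' : ℕ → ℚ) : Matrix (Fin μ) (Fin μ) ℚ :=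
  Matrix.of fun i j =>
    (if (j : ℕ) = 0 then -c' ((i : ℕ) + 1) else 0) +
    (if (j : ℕ) = (i : ℕ) + 1 then 1 else 0)

/-! Each factor `∑_{j < a_{2k+2}} t^{j d_{2k+1}}` equals
`(1 - t^{d_{2k+2}}) / (1 - t^{d_{2k+1}})`, so with `q := (1 - t) ∏_k ∑_j t^{j d_{2k+1}}`
the product `φ_{2m+1} q` telescopes to `1 - t^{d_{2m+1}}`. As `μ̃_{2m+1} ≤ d_{2m+1}`,
`N^{d_{2m+1}} = 0`, whence `φ(N) q(N) = 1`. Moreover `1/φ - q = t^{d_{2m+1}}/φ`, so `q`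
agrees with `1/φ` below degree `d_{2m+1}` and `q(N) = χ`. -/

lemma nilpN_pow_apply (μ k : ℕ) (i j : Fin μ) :
    (nilpN μ ^ k) i j = if (j : ℕ) = i + k then 1 else 0 := by
  induction k generalizing j with
  | zero => simp [Matrix.one_apply, Fin.val_inj, eq_comm]
  | succ k ih =>
    rw [pow_succ, Matrix.mul_apply]
    simp only [ih]
    simp only [nilpN, Matrix.of_apply, ite_mul, one_mul, zero_mul]
    rw [Fin.sum_univ_eq_sum_range (fun l => if l = (i : ℕ) + k then
      (if (j : ℕ) = l + 1 then (1 : ℚ) else 0) else 0), Finset.sum_ite_eq']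
    simp only [Finset.mem_range]
    split_ifs <;> first | rfl | (exfalso; omega)

lemma nilpN_pow_eq_zero {μ k : ℕ} (hk : μ ≤ k) : nilpN μ ^ k = 0 := by
  ext i j
  rw [nilpN_pow_apply, if_neg (by omega), Matrix.zero_apply]

lemma Polynomial.aeval_eq_sum_range_of_pow_eq_zero {R A : Type*} [CommSemiring R] [Semiring A]
    [Algebra R A] {x : A} {μ : ℕ} (hx : x ^ μ = 0) (q : R[X]) :
    aeval x q = ∑ i ∈ range μ, q.coeff i • x ^ i := by
  rw [aeval_eq_sum_range' (n := μ + (q.natDegree + 1)) (by omega), Finset.sum_range_add]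
  simp [pow_add, hx]

lemma PowerSeries.coeff_inv_eq_coeff_of_mul_eq_one_sub_X_pow {K : Type*} [Field K]
    {p q : K[X]} {d : ℕ} (hpq : p * q = 1 - Polynomial.X ^ d) {i : ℕ} (hi : i < d) :
    coeff i ((p : PowerSeries K)⁻¹) = q.coeff i := by
  have hp0 : constantCoeff (p : PowerSeries K) ≠ 0 := by
    have h0 := congrArg (fun r : K[X] => r.coeff 0) hpq
    simp only [Polynomial.mul_coeff_zero, Polynomial.coeff_sub, Polynomial.coeff_one_zero,
      Polynomial.coeff_X_pow, if_neg (by omega : 0 ≠ d), sub_zero] at h0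
    rw [Polynomial.constantCoeff_coe]
    exact left_ne_zero_of_mul_eq_one h0
  have hpq' : (p : PowerSeries K) * (q : PowerSeries K) = 1 - X ^ d := by
    rw [← Polynomial.coe_mul, hpq]
    push_cast
    rfl
  have hq : (q : PowerSeries K) = (p : PowerSeries K)⁻¹ * (1 - X ^ d) := by
    rw [← hpq', ← mul_assoc, PowerSeries.inv_mul_cancel _ hp0, one_mul]
  rw [← Polynomial.coeff_coe, hq, mul_sub, mul_one, map_sub, coeff_mul_X_pow',
    if_neg (by omega), sub_zero]

lemma RatFunc.one_sub_X_pow_ne_zero {K : Type*} [Field K] {d : ℕ} (hd : 0 < d) :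
    (1 : RatFunc K) - X ^ d ≠ 0 := by
  rw [sub_ne_zero, ne_comm, ← algebraMap_X, ← map_pow,
    ← map_one (algebraMap K[X] (RatFunc K)), (algebraMap_injective K).ne_iff,
    ← sub_ne_zero, ← Polynomial.C_1]
  exact Polynomial.X_pow_sub_C_ne_zero hd 1

lemma RatFunc.algebraMap_sum_X_pow_mul {K : Type*} [Field K] {d : ℕ} (hd : 0 < d) (b : ℕ) :
    algebraMap K[X] (RatFunc K) (∑ j ∈ range b, Polynomial.X ^ (j * d))
      = (1 - X ^ (b * d)) / (1 - X ^ d) := by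
  have hx : (X : RatFunc K) ^ d ≠ 1 := fun h => one_sub_X_pow_ne_zero hd (by rw [h, sub_self])
  simp only [map_sum, map_pow, algebraMap_X, mul_comm _ d, pow_mul]
  rw [geom_sum_eq hx, ← neg_div_neg_eq, neg_sub, neg_sub]

section Chain

variable (a : ℕ → ℕ)

lemma chainD_succ (k : ℕ) : chainD a (k + 1) = chainD a k * a (k + 1) :=
  Finset.prod_Icc_succ_top (by omega) a

lemma chainD_pos {k : ℕ} (ha : ∀ i ∈ Icc 1 k, 0 < a i) : 0 < chainD a k :=
  Finset.prod_pos ha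

lemma chainMu_nonneg_and_le_chainD {k : ℕ} (ha : ∀ i ∈ Icc 1 k, 0 < a i) :
    0 ≤ chainMu a k ∧ chainMu a k ≤ chainD a k := by
  induction k with
  | zero => simp [chainMu, chainD]
  | succ k ih =>
    obtain ⟨h0, h1⟩ := ih fun i hi => ha i (Icc_subset_Icc_right (by omega) hi)
    have hmono : chainD a k ≤ chainD a (k + 1) := by
      rw [chainD_succ]
      exact Nat.le_mul_of_pos_right _ (ha (k + 1) (by simp))
    simp only [chainMu]
    omega

lemma chainPhi_one : chainPhi a 1 = (1 - RatFunc.X)⁻¹ * (1 - RatFunc.X ^ chainD a 1) := by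
  simp [chainPhi, Finset.prod_range_succ, chainD]

lemma chainPhi_add_two (n : ℕ) :
    chainPhi a (n + 2) = chainPhi a n * (1 - RatFunc.X ^ chainD a (n + 1))⁻¹
      * (1 - RatFunc.X ^ chainD a (n + 2)) := by
  rw [chainPhi, Finset.prod_range_succ, Finset.prod_range_succ, chainPhi]
  congr 2
  · refine Finset.prod_congr rfl fun i hi => ?_
    rw [show n + 2 - i = n - i + 2 by simp at hi; omega, pow_add]
    simp
  · simp [show n + 2 - (n + 1) = 1 by omega]
  · simp

noncomputable def chainGeomSum (k : ℕ) : ℚ[X] :=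
  ∑ j ∈ range (a (2 * k + 2)), X ^ (j * chainD a (2 * k + 1))

lemma algebraMap_chainGeomSum {k : ℕ} (hd : 0 < chainD a (2 * k + 1)) :
    algebraMap ℚ[X] (RatFunc ℚ) (chainGeomSum a k)
      = (1 - RatFunc.X ^ chainD a (2 * k + 2)) / (1 - RatFunc.X ^ chainD a (2 * k + 1)) := by
  rw [chainGeomSum, RatFunc.algebraMap_sum_X_pow_mul hd, mul_comm (a _), ← chainD_succ]

lemma chainPhi_mul_telescope (m : ℕ) (hd : ∀ i ≤ 2 * m, 0 < chainD a i) :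
    chainPhi a (2 * m + 1) * ((1 - RatFunc.X) * ((List.range m).map fun k =>
      (1 - RatFunc.X ^ chainD a (2 * k + 2)) / (1 - RatFunc.X ^ chainD a (2 * k + 1))).prod)
      = 1 - RatFunc.X ^ chainD a (2 * m + 1) := by
  induction m with
  | zero =>
    have hX : (1 : RatFunc ℚ) - RatFunc.X ≠ 0 := by
      simpa using RatFunc.one_sub_X_pow_ne_zero (K := ℚ) one_pos
    simp only [Nat.mul_zero, Nat.zero_add, chainPhi_one, List.range_zero, List.map_nil,
      List.prod_nil]
    field_simp
  | succ m ih =>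
    have hF₁ := RatFunc.one_sub_X_pow_ne_zero (K := ℚ) (hd (2 * m + 1) (by omega))
    have hF₂ := RatFunc.one_sub_X_pow_ne_zero (K := ℚ) (hd (2 * m + 2) (by omega))
    rw [show 2 * (m + 1) + 1 = 2 * m + 1 + 2 by ring, chainPhi_add_two, List.prod_range_succ,
      show 2 * m + 1 + 1 = 2 * m + 2 by ring, show 2 * m + 1 + 2 = 2 * m + 3 by ring]
    calc _ = chainPhi a (2 * m + 1) * ((1 - RatFunc.X) * ((List.range m).map fun k =>
          (1 - RatFunc.X ^ chainD a (2 * k + 2)) / (1 - RatFunc.X ^ chainD a (2 * k + 1))).prod)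
          * ((1 - RatFunc.X ^ chainD a (2 * m + 2)) / (1 - RatFunc.X ^ chainD a (2 * m + 1)))
          * (1 - RatFunc.X ^ chainD a (2 * m + 2))⁻¹
          * (1 - RatFunc.X ^ chainD a (2 * m + 3)) := by
          ring
      _ = _ := by
          rw [ih fun i hi => hd i (by omega)]
          field_simp

end Chain

/-- for `n = 2m+1`, `m ≥ 0`:
`(𝟏 − N) · ∏_{k=1}^{m} (∑_{j=0}^{a_{2k}−1} N^{j·d_{2k−1}}) = χ_{2m+1}`; equivalently
`φ_{2m+1}(N) · (𝟏 − N) · ∏_{k=1}^{m} (∑_{j=0}^{a_{2k}−1} N^{j·d_{2k−1}}) = 𝟏`.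
(The product over `k = 1, …, m` is reindexed as `k = 0, …, m−1`, taken as an ordered
list product since matrices a priori need not commute.) -/
theorem stmt_10 (m : ℕ) (n : ℕ) (hn : n = 2 * m + 1)
    (a : ℕ → ℕ) (ha : ∀ i, 1 ≤ i → i ≤ n → 2 ≤ a i)
    (p : Polynomial ℚ)
    (hp : algebraMap (Polynomial ℚ) (RatFunc ℚ) p = chainPhi a n)
    (c : ℕ → ℚ)
    (hc : ∀ i, c i = PowerSeries.coeff (R := ℚ) i ((p : PowerSeries ℚ)⁻¹)) :
    (1 - nilpN (chainMu a n).toNat) *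
        ((List.range m).map (fun k =>
          ∑ j ∈ Finset.range (a (2 * k + 2)),
            (nilpN (chainMu a n).toNat) ^ (j * chainD a (2 * k + 1)))).prod
      = chiMat (chainMu a n).toNat c ∧
    Polynomial.aeval (nilpN (chainMu a n).toNat) p *
        ((1 - nilpN (chainMu a n).toNat) *
          ((List.range m).map (fun k =>
            ∑ j ∈ Finset.range (a (2 * k + 2)),
              (nilpN (chainMu a n).toNat) ^ (j * chainD a (2 * k + 1)))).prod)
      = 1 := by
  subst hn
  have ha_pos : ∀ i ∈ Icc 1 (2 * m + 1), 0 < a i := fun i hi => by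
    have := ha i (mem_Icc.1 hi).1 (mem_Icc.1 hi).2
    omega
  have hd : ∀ i ≤ 2 * m + 1, 0 < chainD a i := fun i hi =>
    chainD_pos a fun j hj => ha_pos j (Icc_subset_Icc_right hi hj)
  set q : ℚ[X] := (1 - X) * ((List.range m).map (chainGeomSum a)).prod
  have hpq : p * q = 1 - X ^ chainD a (2 * m + 1) := RatFunc.algebraMap_injective ℚ <| by
    simp only [q, map_mul, hp, map_sub, map_one, map_pow, RatFunc.algebraMap_X, map_list_prod,
      List.map_map]
    rw [← chainPhi_mul_telescope a m fun i hi => hd i (by omega)]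
    congr 3
    refine List.map_congr_left fun k hk => algebraMap_chainGeomSum a (hd _ ?_)
    simp only [List.mem_range] at hk
    omega
  have hμ : (chainMu a (2 * m + 1)).toNat ≤ chainD a (2 * m + 1) :=
    Int.toNat_le.mpr (chainMu_nonneg_and_le_chainD a ha_pos).2
  have hq : (1 - nilpN (chainMu a (2 * m + 1)).toNat) * ((List.range m).map (fun k =>
      ∑ j ∈ range (a (2 * k + 2)),
        nilpN (chainMu a (2 * m + 1)).toNat ^ (j * chainD a (2 * k + 1)))).prod
      = aeval (nilpN (chainMu a (2 * m + 1)).toNat) q := by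
    simp [q, map_list_prod, Function.comp_def, chainGeomSum]
  rw [hq]
  refine ⟨?_, ?_⟩
  · rw [aeval_eq_sum_range_of_pow_eq_zero (nilpN_pow_eq_zero le_rfl), chiMat]
    refine Finset.sum_congr rfl fun i hi => ?_
    rw [hc, PowerSeries.coeff_inv_eq_coeff_of_mul_eq_one_sub_X_pow hpq (by simp at hi; omega)]
  · rw [← map_mul, hpq, map_sub, map_one, map_pow, aeval_X, nilpN_pow_eq_zero hμ, sub_zero]
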